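/- Harary's Balance Theorem: a finite signed graph Σ (simple underlying graph) is balanced (every cycle has an even number of negative edges) if and only if there is a partition (V₁, V₂) of the vertex set such that the negative edges are exactly the edges between V₁ and V₂. -/
import Mathlib

open SimpleGraph Walk

namespace HararyAux

variable {V : Type*} {G : SimpleGraph V}

/-- Number of negative edges of a walk. -/
def nC (σ : Sym2 V → ℤ) {u v : V} (p : G.Walk u v) : ℕ :=
  (p.edges.filter (fun e => σ e = -1)).length

@[simp] lemma nC_nil (σ : Sym2 V → ℤ) {u : V} : nC σ (Walk.nil : G.Walk u u) = 0 := rfl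

lemma nC_cons (σ : Sym2 V → ℤ) {u x v : V} (h : G.Adj u x) (p : G.Walk x v) :
    nC σ (Walk.cons h p) = (if σ s(u, x) = -1 then 1 else 0) + nC σ p := by
  simp only [nC, edges_cons, List.filter_cons]
  split <;> rename_i hcond <;> simp_all <;> omega

lemma nC_append (σ : Sym2 V → ℤ) {u v w : V} (p : G.Walk u v) (q : G.Walk v w) :
    nC σ (p.append q) = nC σ p + nC σ q := by
  simp [nC, edges_append, List.filter_append]

lemma nC_reverse (σ : Sym2 V → ℤ) {u v : V} (p : G.Walk u v) :
    nC σ p.reverse = nC σ p := by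
  simp [nC, edges_reverse, List.filter_reverse]

/-- Given a "cut" set `S`, the parity of the negative edges of a walk is determined
by whether the endpoints are on the same side. -/
lemma walk_parity {σ : Sym2 V → ℤ} {S : Set V}
    (hS : ∀ u v : V, G.Adj u v → (σ s(u, v) = -1 ↔ ¬(u ∈ S ↔ v ∈ S))) :
    ∀ {u v : V} (p : G.Walk u v), (Even (nC σ p) ↔ (u ∈ S ↔ v ∈ S)) := by
  intro u v p
  induction p with
  | nil => simp
  | @cons a b c h p ih =>
    rw [nC_cons, Nat.even_add]
    have hab := hS a b h
    by_cases hm : σ s(a, b) = -1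
    · rw [if_pos hm]
      rw [hab] at hm
      have h1 : ¬ Even 1 := by decide
      tauto
    · rw [if_neg hm]
      have hab' : a ∈ S ↔ b ∈ S := by tauto
      have h0 : Even 0 := Even.zero
      tauto

/-- If every cycle has an even number of negative edges, so does every closed walk. -/
lemma closed_even {σ : Sym2 V → ℤ}
    (hbal : ∀ (v : V) (w : G.Walk v v), w.IsCycle →
      Even ((w.edges.filter (fun e => σ e = -1)).length)) :
    ∀ (n : ℕ) (v : V) (c : G.Walk v v), c.length = n → Even (nC σ c) := by
  classical
  intro n
  induction n using Nat.strong_induction_on with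
  | _ n ih =>
  intro v c hn
  by_cases hnd : c.support.tail.Nodup
  · -- the support (minus the initial vertex) has no duplicates
    cases c with
    | nil => simp
    | @cons _ w _ h p =>
      simp only [support_cons, List.tail_cons] at hnd
      have hps : p.IsPath := by rw [isPath_def]; exact hnd
      by_cases he : s(v, w) ∈ p.edges
      · -- then the walk must have length 2
        cases p with
        | nil => simp at he
        | @cons _ y _ h' q =>
          simp only [edges_cons, List.mem_cons] at he
          rcases he with he | he
          · -- s(v, w) = s(w, y), so y = v and q is a closed path, hence nil
            have hy : v = y := by
              rw [Sym2.eq_iff] at he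
              rcases he with ⟨hvw, -⟩ | ⟨hvy, -⟩
              · exact absurd hvw h.ne
              · exact hvy
            subst hy
            have hq : q = Walk.nil := by
              rw [← isPath_iff_eq_nil, isPath_def]
              simp only [support_cons, List.nodup_cons] at hnd
              exact hnd.2
            subst hq
            have hsw : s(w, v) = s(v, w) := Sym2.eq_swap
            by_cases hm : σ s(v, w) = -1 <;>
              simp [nC_cons, hsw, hm]
          · -- the edge appears later in the path: contradicts nodup of support
            exfalso
            have hwq : w ∈ q.support := snd_mem_support_of_mem_edges q he
            simp only [support_cons, List.nodup_cons] at hnd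
            exact hnd.1 hwq
      · -- it's a genuine cycle
        exact hbal _ _ ((cons_isCycle_iff p h).mpr ⟨hps, he⟩)
  · -- there is a repeated vertex: split the walk into two shorter closed walks
    rw [List.nodup_iff_count_le_one] at hnd
    push_neg at hnd
    obtain ⟨x, hx2⟩ := hnd
    have hx2' : 2 ≤ c.support.tail.count x := hx2
    have hxt : x ∈ c.support.tail := by
      rw [← List.count_pos_iff]; omega
    have hxs : x ∈ c.support := by
      rw [support_eq_cons]; exact List.mem_cons_of_mem _ hxt
    set t := c.takeUntil x hxs with ht
    set d := c.dropUntil x hxs with hd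
    have hspec : t.append d = c := take_spec c hxs
    have hts : t.support.count x = 1 := count_support_takeUntil_eq_one c hxs
    have hcsup : c.support = t.support ++ d.support.tail := by
      rw [← hspec, support_append]
    have hccount : c.support.count x = 1 + d.support.tail.count x := by
      rw [hcsup, List.count_append, hts]
    have hccount2 : 2 ≤ c.support.count x := by
      rw [support_eq_cons, List.count_cons]
      split <;> omega
    have hxd : x ∈ d.support.tail := by
      rw [← List.count_pos_iff]; omega
    have hdnotnil : ¬ d.Nil := by
      rw [not_nil_iff_lt_length]
      by_contra hcon
      push_neg at hcon
      interval_cases hdl : d.length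
      · have : d.support.length = 1 := by rw [length_support, hdl]
        rcases List.length_eq_one_iff.mp this with ⟨a, ha⟩
        rw [ha] at hxd; simp at hxd
    obtain ⟨y, h', e, hde⟩ := (not_nil_iff).mp hdnotnil
    have hxe : x ∈ e.support := by
      rw [hde] at hxd; simpa using hxd
    set eT := e.takeUntil x hxe with heT
    set eD := e.dropUntil x hxe with heD
    have hespec : eT.append eD = e := take_spec e hxe
    -- the two shorter closed walks
    set c₁ : G.Walk x x := Walk.cons h' eT with hc₁
    set c₂ : G.Walk v v := t.append eD with hc₂
    -- edge counts add up
    have hcount : nC σ c = nC σ c₁ + nC σ c₂ := by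
      rw [← hspec, nC_append, hde, nC_cons, ← hespec, nC_append, hc₁, nC_cons, hc₂, nC_append]
      ring
    -- lengths add up
    have hlen : c.length = c₁.length + c₂.length := by
      have h1 : t.length + d.length = c.length := by rw [← length_append, hspec]
      have h2 : eT.length + eD.length = e.length := by rw [← length_append, hespec]
      have h3 : d.length = e.length + 1 := by rw [hde, length_cons]
      simp only [hc₁, hc₂, length_cons, length_append]
      omega
    have hc₁pos : 0 < c₁.length := by simp [hc₁, length_cons]
    have hc₂pos : 0 < c₂.length := by
      by_contra hcon
      push_neg at hcon
      simp only [hc₂, length_append, Nat.le_zero, Nat.add_eq_zero] at hcon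
      obtain ⟨htl, hDl⟩ := hcon
      -- t has length 0, so x = v
      have hxv : v = x := eq_of_length_eq_zero htl
      -- count of x in c.support is at least 3
      have hc3 : 3 ≤ c.support.count x := by
        rw [support_eq_cons, List.count_cons]
        simp [hxv]
        omega
      -- but eD is trivial, making the count small
      have heTc : eT.support.count x = 1 := count_support_takeUntil_eq_one e hxe
      have heDsup : eD.support.tail = [] := by
        have : eD.support.length = 1 := by rw [length_support, hDl]
        rcases List.length_eq_one_iff.mp this with ⟨a, ha⟩
        rw [ha]; rfl
      have hesup : e.support = eT.support ++ eD.support.tail := by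
        rw [← hespec, support_append]
      have hecount : e.support.count x = 1 := by
        rw [hesup, heDsup, List.count_append, heTc]; rfl
      have hdtail : d.support.tail = e.support := by rw [hde]; simp
      rw [hdtail, hecount] at hccount
      omega
    have e₁ : Even (nC σ c₁) := ih c₁.length (by omega) x c₁ rfl
    have e₂ : Even (nC σ c₂) := ih c₂.length (by omega) v c₂ rfl
    rw [hcount]
    exact e₁.add e₂

end HararyAux

theorem harary_balance_theorem {V : Type*} [Fintype V]
    (G : SimpleGraph V) (σ : Sym2 V → ℤ)
    (hσ : ∀ e ∈ G.edgeSet, σ e = 1 ∨ σ e = -1) :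
    (∀ (v : V) (w : G.Walk v v), w.IsCycle →
      Even ((w.edges.filter (fun e => σ e = -1)).length)) ↔
    ∃ S : Set V, ∀ u v : V, G.Adj u v →
      (σ s(u, v) = -1 ↔ ¬(u ∈ S ↔ v ∈ S)) := by
  classical
  constructor
  · intro hbal
    -- every closed walk has an even number of negative edges
    have hclosed : ∀ (v : V) (c : G.Walk v v), Even (HararyAux.nC σ c) :=
      fun v c => HararyAux.closed_even hbal c.length v c rfl
    -- hence all walks between two fixed vertices have the same parity
    have hpar : ∀ (u v : V) (p q : G.Walk u v),
        (Even (HararyAux.nC σ p) ↔ Even (HararyAux.nC σ q)) := by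
      intro u v p q
      have := hclosed u (p.append q.reverse)
      rw [HararyAux.nC_append, HararyAux.nC_reverse, Nat.even_add] at this
      exact this
    -- representative of each connected component
    set rep : V → V := fun v => (G.connectedComponentMk v).out with hrep
    have hreach : ∀ v : V, G.Reachable (rep v) v := by
      intro v
      exact SimpleGraph.ConnectedComponent.exact ((G.connectedComponentMk v).out_eq)
    refine ⟨{v : V | ∃ p : G.Walk (rep v) v, ¬ Even (HararyAux.nC σ p)}, ?_⟩
    intro u v huv
    have hrepeq : rep u = rep v := by
      simp only [hrep]
      rw [SimpleGraph.ConnectedComponent.connectedComponentMk_eq_of_adj huv]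
    obtain ⟨p₀⟩ := hreach u
    have hu_mem : (u ∈ {v : V | ∃ p : G.Walk (rep v) v, ¬ Even (HararyAux.nC σ p)}) ↔
        ¬ Even (HararyAux.nC σ p₀) := by
      constructor
      · rintro ⟨p, hp⟩
        rw [hpar _ _ p₀ p]; exact hp
      · intro hp; exact ⟨p₀, hp⟩
    set q₀ : G.Walk (rep v) v := (p₀.copy hrepeq rfl).append (Walk.cons huv Walk.nil)
      with hq₀
    have hv_mem : (v ∈ {v : V | ∃ p : G.Walk (rep v) v, ¬ Even (HararyAux.nC σ p)}) ↔
        ¬ Even (HararyAux.nC σ q₀) := by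
      constructor
      · rintro ⟨p, hp⟩
        rw [hpar _ _ q₀ p]; exact hp
      · intro hp; exact ⟨q₀, hp⟩
    have hq₀count : HararyAux.nC σ q₀ =
        HararyAux.nC σ p₀ + (if σ s(u, v) = -1 then 1 else 0) := by
      rw [hq₀, HararyAux.nC_append, HararyAux.nC_cons]
      have hcopy : HararyAux.nC σ (p₀.copy hrepeq rfl) = HararyAux.nC σ p₀ := by
        simp [HararyAux.nC]
      rw [hcopy]
      simp [HararyAux.nC]
    rw [hu_mem, hv_mem, hq₀count]
    rcases hσ s(u, v) ((SimpleGraph.mem_edgeSet G).mpr huv) with h1 | h1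
    · have hne : ¬ (σ s(u, v) = -1) := by rw [h1]; decide
      simp only [hne, if_false, iff_false, Nat.add_zero]
      tauto
    · simp only [h1, if_true, iff_true]
      rw [Nat.even_add_one]
      tauto
  · rintro ⟨S, hS⟩ v w hw
    have := (HararyAux.walk_parity hS w).mpr (Iff.rfl)
    exact this
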